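/- arXiv:math/0101023 — 4 statements merged into one kernel-verified Lean document; each statement's English description precedes it below -/
import Mathlib

section
/- Let E be a field extension of k of finite degree n, and let V be a k-linear subspace of E with 2·dim_k(V) > n. Then every invertible element x of E can be written as a quotient x = v/w where v, w are nonzero elements of V. -/
/-- Let `E/k` be a field extension of finite degree `n`, and `V` a `k`-linear
subspace of `E` with `2 * dim_k V > n`.  Then every invertible element `x` of `E` is a
quotient `v / w` of two nonzero elements of `V`. -/
theorem stmt_0 (k E : Type*) [Field k] [Field E] [Algebra k E]
    [FiniteDimensional k E] (n : ℕ) (hn : Module.finrank k E = n)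
    (V : Submodule k E) (hV : 2 * Module.finrank k V > n) :
    ∀ x : Eˣ, ∃ v w : E, v ∈ V ∧ w ∈ V ∧ v ≠ 0 ∧ w ≠ 0 ∧ (x : E) = v / w := by
  intro x
  have hx : (x : E) ≠ 0 := x.ne_zero
  set f : E →ₗ[k] E := LinearMap.mulLeft k (x : E) with hf
  have hinj : Function.Injective f := fun a b h => by
    rw [hf] at h
    simp only [LinearMap.mulLeft_apply] at h
    exact mul_left_cancel₀ hx h
  set W : Submodule k E := V.map f with hW
  have hsurj : Function.Surjective f := fun a =>
    ⟨(x⁻¹ : Eˣ) * a, by simp [hf, LinearMap.mulLeft_apply, ← mul_assoc]⟩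
  set e : E ≃ₗ[k] E := LinearEquiv.ofBijective f ⟨hinj, hsurj⟩ with he
  have hdimW : Module.finrank k W = Module.finrank k V := by
    have := LinearEquiv.finrank_map_eq e V
    rwa [show Submodule.map (e : E →ₗ[k] E) V = W from by
      rw [hW]; congr 1] at this
  have hsum : Module.finrank k ↥(V ⊔ W) + Module.finrank k ↥(V ⊓ W)
      = Module.finrank k V + Module.finrank k W :=
    Submodule.finrank_sup_add_finrank_inf_eq V W
  have hle : Module.finrank k ↥(V ⊔ W) ≤ n := hn ▸ Submodule.finrank_le _
  have hpos : 0 < Module.finrank k ↥(V ⊓ W) := by omega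
  have hne : V ⊓ W ≠ ⊥ := fun h => by
    rw [h, finrank_bot] at hpos; exact lt_irrefl 0 hpos
  obtain ⟨u, hu, hune⟩ := Submodule.exists_mem_ne_zero_of_ne_bot hne
  obtain ⟨huV, huW⟩ := Submodule.mem_inf.mp hu
  obtain ⟨w, hwV, hwu⟩ := huW
  have hwne : w ≠ 0 := by
    rintro rfl; apply hune; rw [← hwu]; simp [hf]
  exact ⟨u, w, huV, hwV, hune, hwne, by
    rw [← hwu]; simp [hf, LinearMap.mulLeft_apply]
    field_simp⟩
end

section
/- Let E be a field extension of k of finite degree n, and let V be a k-linear subspace of E with 2·dim_k(V) > n. Then the multiplicative group E* is generated by the nonzero elements of V. -/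
/-! For a unit `u`, the subspaces `V` and `u • V` have dimensions adding up to more than `[E : k]`,
so they meet in some `v ≠ 0`; writing `v = u * w` with `w ∈ V` gives `u = v * w⁻¹`. -/

open Module Pointwise

theorem Submodule.exists_mem_inf_ne_zero_of_finrank_lt_add {K M : Type*} [DivisionRing K]
    [AddCommGroup M] [Module K M] [FiniteDimensional K M] {s t : Submodule K M}
    (h : finrank K M < finrank K s + finrank K t) : ∃ x ∈ s, x ∈ t ∧ x ≠ 0 := by
  by_contra! hst
  exact h.not_ge (Submodule.finrank_add_finrank_le_of_disjoint (Submodule.disjoint_def.2 hst))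

theorem Submodule.finrank_units_smul {k E : Type*} [Field k] [Ring E] [Algebra k E]
    (u : Eˣ) (V : Submodule k E) : finrank k (u • V : Submodule k E) = finrank k V :=
  LinearEquiv.finrank_map_eq (DistribMulAction.toLinearEquiv k E u) V

theorem Submodule.exists_units_mem_eq_mul_inv_of_finrank_lt_two_mul {k E : Type*} [Field k]
    [DivisionRing E] [Algebra k E] [FiniteDimensional k E] {V : Submodule k E}
    (hV : finrank k E < 2 * finrank k V) (u : Eˣ) :
    ∃ v w : Eˣ, (v : E) ∈ V ∧ (w : E) ∈ V ∧ u = v * w⁻¹ := by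
  have hdim : finrank k E < finrank k V + finrank k (u • V : Submodule k E) := by
    rw [Submodule.finrank_units_smul]; omega
  obtain ⟨x, hxV, hxuV, hx⟩ := Submodule.exists_mem_inf_ne_zero_of_finrank_lt_add hdim
  obtain ⟨y, hyV, rfl⟩ := (Submodule.mem_smul_pointwise_iff_exists x u V).1 hxuV
  have hy : y ≠ 0 := by rintro rfl; simp at hx
  refine ⟨Units.mk0 _ hx, Units.mk0 y hy, hxV, hyV, Units.ext ?_⟩
  simp [Units.smul_def, mul_assoc]

/-- Let `E/k` be a field extension of finite degree `n`, and `V` a `k`-linear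
subspace of `E` with `2 * dim_k V > n`.  Then the multiplicative group `Eˣ` is generated by
the (invertible, i.e. nonzero) elements of `V`. -/
theorem stmt_1 (k E : Type*) [Field k] [Field E] [Algebra k E]
    [FiniteDimensional k E] (n : ℕ) (hn : Module.finrank k E = n)
    (V : Submodule k E) (hV : 2 * Module.finrank k V > n) :
    Subgroup.closure {u : Eˣ | (u : E) ∈ V} = ⊤ := by
  refine eq_top_iff.2 fun u _ ↦ ?_
  obtain ⟨v, w, hv, hw, rfl⟩ :=
    Submodule.exists_units_mem_eq_mul_inv_of_finrank_lt_two_mul (hn ▸ hV) u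
  exact mul_mem (Subgroup.subset_closure hv) (inv_mem (Subgroup.subset_closure hw))
end

section
/- Let q be a quadratic form over a field k of characteristic ≠ 2 and let E/k be a finite field extension of odd degree. Then q is isotropic over E if and only if q is isotropic over k. -/
/-!
Diagonalize `q`, so that it suffices to show that an anisotropic form `∑ aᵢ xᵢ²` over `K`
stays anisotropic over an extension `F` of odd degree. Since `F` is a tower of simple extensions
of odd degree, we may assume `F = K[X]/(f)` with `f` irreducible of odd degree. An isotropic
vector there gives polynomials `gᵢ` of degree `< deg f`, which we may take coprime, with
`f ∣ ∑ aᵢ gᵢ²`. The leading coefficient of `∑ aᵢ gᵢ²` is a value of the anisotropic form, so its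
degree is `2 max deg gᵢ`; hence the cofactor has odd degree `< deg f`, and one of its irreducible
factors of odd degree is a smaller counterexample.
-/

open Polynomial Finset QuadraticMap

namespace Polynomial

variable {K : Type*} [Field K]

theorem exists_irreducible_odd_natDegree_dvd {p : K[X]} (hp : Odd p.natDegree) :
    ∃ f : K[X], Irreducible f ∧ Odd f.natDegree ∧ f ∣ p := by
  induction p using WfDvdMonoid.induction_on_irreducible with
  | zero => simp at hp
  | unit u hu => simp [natDegree_eq_zero_of_isUnit hu] at hp
  | mul p f hp0 hf ih =>
    rw [natDegree_mul hf.ne_zero hp0, Nat.odd_add'] at hp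
    by_cases hfodd : Odd f.natDegree
    · exact ⟨f, hf, hfodd, dvd_mul_right f p⟩
    · obtain ⟨g, hg, hgodd, hgp⟩ := ih (hp.2 (Nat.not_odd_iff_even.1 hfodd))
      exact ⟨g, hg, hgodd, hgp.mul_left f⟩

variable {ι : Type*} [Fintype ι] {a : ι → K}

theorem exists_degree_sum_C_mul_sq_eq (ha : (weightedSumSquares K a).Anisotropic)
    {g : ι → K[X]} (hg : g ≠ 0) :
    ∃ i, g i ≠ 0 ∧ (∑ j, C (a j) * g j ^ 2).degree = ↑(2 * (g i).natDegree) := by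
  classical
  obtain ⟨i₀, hi₀⟩ := Function.ne_iff.1 hg
  obtain ⟨i, hi, hmax⟩ := (univ.filter (g · ≠ 0)).exists_max_image (natDegree ∘ g)
    ⟨i₀, by simpa using hi₀⟩
  have hi : g i ≠ 0 := by simpa using hi
  have hle : ∀ j, (g j).natDegree ≤ (g i).natDegree := fun j => by
    by_cases hj : g j = 0
    · simp [hj]
    · exact hmax j (by simpa using hj)
  refine ⟨i, hi, degree_eq_of_le_of_coeff_ne_zero ?_ ?_⟩
  · refine degree_le_of_natDegree_le (natDegree_sum_le_of_forall_le _ _ fun j _ => ?_)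
    exact (natDegree_C_mul_le _ _).trans (natDegree_pow_le.trans (Nat.mul_le_mul_left 2 (hle j)))
  · have hcoeff : (∑ j, C (a j) * g j ^ 2).coeff (2 * (g i).natDegree)
        = weightedSumSquares K a fun j => (g j).coeff (g i).natDegree := by
      rw [finsetSum_coeff, weightedSumSquares_apply]
      refine sum_congr rfl fun j _ => ?_
      rw [coeff_C_mul, coeff_pow_of_natDegree_le (hle j), smul_eq_mul, pow_two]
    rw [hcoeff]
    intro h0
    have := congrFun (ha _ h0) i
    simp [hi] at this

theorem exists_irreducible_odd_natDegree_lt_dvd_sum_C_mul_sq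
    (ha : (weightedSumSquares K a).Anisotropic) {f : K[X]} (hodd : Odd f.natDegree)
    {g : ι → K[X]} (hg : g ≠ 0) (hdeg : ∀ i, (g i).degree < f.degree)
    (hdvd : f ∣ ∑ i, C (a i) * g i ^ 2) :
    ∃ p : K[X], Irreducible p ∧ Odd p.natDegree ∧ p.natDegree < f.natDegree ∧
      p ∣ ∑ i, C (a i) * g i ^ 2 := by
  obtain ⟨i, hi, hS⟩ := exists_degree_sum_C_mul_sq_eq ha hg
  obtain ⟨h, hh⟩ := hdvd
  have hS0 : ∑ j, C (a j) * g j ^ 2 ≠ 0 := fun h0 => by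
    rw [h0, degree_zero] at hS
    exact WithBot.bot_ne_coe hS
  have hf0 : f ≠ 0 := by rintro rfl; simp at hodd
  have hh0 : h ≠ 0 := right_ne_zero_of_mul (hh ▸ hS0)
  have hsum : f.natDegree + h.natDegree = 2 * (g i).natDegree := by
    rw [← natDegree_mul hf0 hh0, ← hh, natDegree_eq_of_degree_eq_some hS]
  have hlt : (g i).natDegree < f.natDegree := natDegree_lt_natDegree hi (hdeg i)
  have hhodd : Odd h.natDegree := by rw [Nat.odd_iff] at hodd ⊢; omega
  obtain ⟨p, hp, hpodd, hph⟩ := exists_irreducible_odd_natDegree_dvd hhodd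
  exact ⟨p, hp, hpodd, (natDegree_le_of_dvd hph hh0).trans_lt (by omega), hh ▸ hph.mul_left f⟩

theorem dvd_of_dvd_sum_C_mul_sq (ha : (weightedSumSquares K a).Anisotropic) {f : K[X]}
    (hf : Irreducible f) (hodd : Odd f.natDegree) {g : ι → K[X]}
    (hdvd : f ∣ ∑ i, C (a i) * g i ^ 2) : ∀ i, f ∣ g i := by
  induction hn : f.natDegree using Nat.strong_induction_on generalizing f g with
  | _ n ih =>
  classical
  set r := fun j => g j % f
  have hr : f ∣ ∑ j, C (a j) * r j ^ 2 := by
    have hdiff : f ∣ ∑ j, C (a j) * g j ^ 2 - ∑ j, C (a j) * r j ^ 2 := by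
      rw [← sum_sub_distrib]
      exact dvd_sum fun j _ => ⟨C (a j) * (g j / f) * (g j + r j), by
        linear_combination (-C (a j) * (g j + r j)) * EuclideanDomain.div_add_mod (g j) f⟩
    simpa using dvd_sub hdvd hdiff
  suffices r = 0 from fun i => EuclideanDomain.mod_eq_zero.1 (congrFun this i)
  by_contra hr0
  obtain ⟨j, hj⟩ := Function.ne_iff.1 hr0
  obtain ⟨s, hrs, hs1⟩ := univ.extract_gcd r ⟨j, mem_univ j⟩
  set c := univ.gcd r
  replace hrs : ∀ i, r i = c * s i := fun i => hrs i (mem_univ i)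
  have hc0 : c ≠ 0 := fun h => hj (gcd_eq_zero_iff.1 h j (mem_univ j))
  have hcf : ¬ f ∣ c := fun hfc =>
    ((degree_le_of_dvd hfc hc0).trans (degree_le_of_dvd (gcd_dvd (mem_univ j)) hj)).not_gt
      (degree_mod_lt _ hf.ne_zero)
  have hs : f ∣ ∑ i, C (a i) * s i ^ 2 := by
    have hfactor : ∑ i, C (a i) * r i ^ 2 = c ^ 2 * ∑ i, C (a i) * s i ^ 2 := by
      rw [mul_sum]
      exact sum_congr rfl fun i _ => by rw [hrs i]; ring
    rw [hfactor] at hr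
    exact (hf.prime.dvd_or_dvd hr).resolve_left fun h => hcf (hf.prime.dvd_of_dvd_pow h)
  have hs0 : s ≠ 0 := fun h => hj (by rw [hrs j, h, Pi.zero_apply, mul_zero])
  have hsdeg : ∀ i, (s i).degree < f.degree := fun i =>
    ((degree_le_mul_left (s i) hc0).trans_eq (by rw [mul_comm, ← hrs i])).trans_lt
      (degree_mod_lt (g i) hf.ne_zero)
  obtain ⟨p, hp, hpodd, hplt, hps⟩ :=
    exists_irreducible_odd_natDegree_lt_dvd_sum_C_mul_sq ha hodd hs0 hsdeg hs
  have hpdvd : ∀ i, p ∣ s i := ih _ (hn ▸ hplt) hp hpodd hps rfl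
  exact hp.not_isUnit (isUnit_of_dvd_one (hs1 ▸ dvd_gcd fun i _ => hpdvd i))

end Polynomial

universe u

section Field

open Module IntermediateField

variable {K F : Type*} [Field K] [Field F] [Algebra K F] {ι : Type*} [Fintype ι] {a : ι → K}

theorem algebraMap_weightedSumSquares (a y : ι → K) :
    algebraMap K F (weightedSumSquares K a y) =
      weightedSumSquares F (algebraMap K F ∘ a) (algebraMap K F ∘ y) := by
  simp [weightedSumSquares_apply]

theorem anisotropic_of_anisotropic_weightedSumSquares_algebraMap
    (h : (weightedSumSquares F (algebraMap K F ∘ a)).Anisotropic) :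
    (weightedSumSquares K a).Anisotropic := fun y hy =>
  funext fun i => (algebraMap K F).injective <| by
    simpa using congrFun (h _ ((algebraMap_weightedSumSquares a y).symm.trans (by simp [hy]))) i

theorem anisotropic_weightedSumSquares_algebraMap_of_surjective
    (hsurj : Function.Surjective (algebraMap K F)) (ha : (weightedSumSquares K a).Anisotropic) :
    (weightedSumSquares F (algebraMap K F ∘ a)).Anisotropic := by
  intro x hx
  choose y hy using fun i => hsurj (x i)
  obtain rfl : algebraMap K F ∘ y = x := funext hy
  have hy0 : y = 0 := ha y ((algebraMap K F).injective (by
    rw [algebraMap_weightedSumSquares, hx, map_zero]))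
  simp [hy0]

theorem PowerBasis.anisotropic_weightedSumSquares_algebraMap (pb : PowerBasis K F)
    (hodd : Odd pb.dim) (ha : (weightedSumSquares K a).Anisotropic) :
    (weightedSumSquares F (algebraMap K F ∘ a)).Anisotropic := by
  intro x hx
  choose g hg using fun i => pb.exists_eq_aeval' (x i)
  have hdvd : minpoly K pb.gen ∣ ∑ i, C (a i) * g i ^ 2 := minpoly.dvd K pb.gen <| by
    rw [← hx]
    simp [hg, weightedSumSquares_apply, pow_two]
  have hg0 := Polynomial.dvd_of_dvd_sum_C_mul_sq ha (minpoly.irreducible pb.isIntegral_gen)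
    (pb.natDegree_minpoly ▸ hodd) hdvd
  exact funext fun i =>
    (hg i).trans (aeval_eq_zero_of_dvd_aeval_eq_zero (hg0 i) (minpoly.aeval K _))

-- The induction passes through `K⟮α⟯`, which lives in the universe of `F`.
private theorem anisotropic_weightedSumSquares_algebraMap_of_odd_finrank_aux {K F : Type u}
    [Field K] [Field F] [Algebra K F] [FiniteDimensional K F] (hodd : Odd (finrank K F)) {a : ι → K}
    (ha : (weightedSumSquares K a).Anisotropic) :
    (weightedSumSquares F (algebraMap K F ∘ a)).Anisotropic := by
  induction hn : finrank K F using Nat.strong_induction_on generalizing K with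
  | _ n ih =>
  by_cases! hα : ∀ α : F, α ∈ (⊥ : IntermediateField K F)
  · exact anisotropic_weightedSumSquares_algebraMap_of_surjective (fun α => mem_bot.1 (hα α)) ha
  obtain ⟨α, hα⟩ := hα
  set L := K⟮α⟯
  let pb := adjoin.powerBasis (IsIntegral.of_finite K α)
  have htower : finrank K L * finrank L F = finrank K F := finrank_mul_finrank K L F
  have hoddKL : Odd (finrank K L) := (Nat.odd_mul.1 (htower ▸ hodd)).1
  have hoddLF : Odd (finrank L F) := (Nat.odd_mul.1 (htower ▸ hodd)).2
  have hKL : finrank K L ≠ 1 := fun h =>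
    hα (adjoin_simple_eq_bot_iff.1 (finrank_eq_one_iff.1 h))
  have hlt : finrank L F < n := by
    have : 2 ≤ finrank K L := by have := finrank_pos (R := K) (M := L); omega
    have := finrank_pos (R := L) (M := F)
    rw [← hn, ← htower]
    nlinarith
  have haL := pb.anisotropic_weightedSumSquares_algebraMap (pb.finrank ▸ hoddKL) ha
  rw [IsScalarTower.algebraMap_eq K L F, RingHom.coe_comp]
  exact ih _ hlt hoddLF haL rfl

theorem anisotropic_weightedSumSquares_algebraMap_of_odd_finrank [FiniteDimensional K F]
    (hodd : Odd (finrank K F)) (ha : (weightedSumSquares K a).Anisotropic) :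
    (weightedSumSquares F (algebraMap K F ∘ a)).Anisotropic := by
  have hsurj : Function.Surjective (algebraMap K (⊥ : IntermediateField K F)) := fun x =>
    ⟨botEquiv K F x, by rw [← botEquiv_symm, AlgEquiv.symm_apply_apply]⟩
  have := anisotropic_weightedSumSquares_algebraMap_of_odd_finrank_aux
    (K := (⊥ : IntermediateField K F)) (by rwa [finrank_bot'])
    (anisotropic_weightedSumSquares_algebraMap_of_surjective hsurj ha)
  rwa [IsScalarTower.algebraMap_eq K (⊥ : IntermediateField K F) F, RingHom.coe_comp]

theorem anisotropic_weightedSumSquares_algebraMap_iff_of_odd_finrank [FiniteDimensional K F]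
    (hodd : Odd (finrank K F)) :
    (weightedSumSquares F (algebraMap K F ∘ a)).Anisotropic ↔
      (weightedSumSquares K a).Anisotropic :=
  ⟨anisotropic_of_anisotropic_weightedSumSquares_algebraMap,
    anisotropic_weightedSumSquares_algebraMap_of_odd_finrank hodd⟩

end Field

theorem QuadraticMap.IsometryEquiv.anisotropic_iff {R M₁ M₂ N : Type*} [CommSemiring R]
    [AddCommMonoid M₁] [AddCommMonoid M₂] [AddCommMonoid N] [Module R M₁] [Module R M₂]
    [Module R N] {Q₁ : QuadraticMap R M₁ N} {Q₂ : QuadraticMap R M₂ N}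
    (e : Q₁.IsometryEquiv Q₂) : Q₁.Anisotropic ↔ Q₂.Anisotropic := by
  refine ⟨fun h x hx => ?_, fun h x hx => ?_⟩
  · have := h (e.symm x) (by rwa [e.symm.map_app])
    simpa using congrArg e this
  · have := h (e x) (by rwa [e.map_app])
    simpa using this

theorem QuadraticForm.anisotropic_iff_weightedSumSquares {R M ι : Type*} [CommRing R]
    [Invertible (2 : R)] [AddCommGroup M] [Module R M] [Fintype ι] (Q : QuadraticForm R M)
    (v : Module.Basis ι R M) (hv : (associated (R := R) Q).IsOrthoᵢ v) :
    Q.Anisotropic ↔ (weightedSumSquares R fun i => Q (v i)).Anisotropic := by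
  rw [← basisRepr_eq_of_iIsOrtho Q v hv]
  exact (Q.isometryEquivBasisRepr v).anisotropic_iff

theorem LinearMap.BilinForm.isOrthoᵢ_baseChange {R A M ι : Type*} [CommRing R] [CommRing A]
    [Algebra R A] [AddCommGroup M] [Module R M] {B : LinearMap.BilinForm R M}
    {v : Module.Basis ι R M} (hv : B.IsOrthoᵢ v) :
    (B.baseChange A).IsOrthoᵢ (v.baseChange A) := fun i j hij => by
  have hvij : B (v i) (v j) = 0 := hv hij
  simp only [Function.onFun, Module.Basis.baseChange_apply, LinearMap.BilinForm.baseChange_tmul,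
    hvij, zero_smul]

open scoped TensorProduct

/-- Springer's theorem: let `q` be a quadratic form over a field `k` of
characteristic `≠ 2` and `E/k` a finite field extension of odd degree.  Then `q` is
isotropic over `E` if and only if it is isotropic over `k`. -/
theorem stmt_3 (k E V : Type*) [Field k] [Invertible (2 : k)] [Field E] [Algebra k E]
    [FiniteDimensional k E] (hodd : Odd (Module.finrank k E))
    [AddCommGroup V] [Module k V] [FiniteDimensional k V]
    (q : QuadraticForm k V) :
    (∃ w : E ⊗[k] V, w ≠ 0 ∧ q.baseChange E w = 0) ↔ ∃ v : V, v ≠ 0 ∧ q v = 0 := by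
  have : Invertible (2 : E) := (Invertible.map (algebraMap k E) 2).copy 2 (map_ofNat _ 2).symm
  obtain ⟨b, hb⟩ :=
    LinearMap.BilinForm.exists_orthogonal_basis (QuadraticForm.associated_isSymm k q)
  have hbE : (associated (R := E) (q.baseChange E)).IsOrthoᵢ (b.baseChange E) := by
    rw [QuadraticForm.associated_baseChange]
    exact LinearMap.BilinForm.isOrthoᵢ_baseChange hb
  have hweights : (fun i => q.baseChange E (b.baseChange E i)) = algebraMap k E ∘ (q ∘ b) := by
    funext i
    simp [Module.Basis.baseChange_apply, Algebra.algebraMap_eq_smul_one]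
  have key : (q.baseChange E).Anisotropic ↔ q.Anisotropic := by
    rw [QuadraticForm.anisotropic_iff_weightedSumSquares _ _ hbE, hweights,
      QuadraticForm.anisotropic_iff_weightedSumSquares _ _ hb]
    exact anisotropic_weightedSumSquares_algebraMap_iff_of_odd_finrank hodd
  simpa only [not_anisotropic_iff_exists] using key.not
end

section
/- Let k be an infinite field, p a closed separable point of affine n-space Aⁿ over k of degree m with n ≥ 2. Then there exists a linear coordinate x₁ on Aⁿ such that the induced map of residue fields k(x₁(p)) → k(p) is an isomorphism, where x₁(p) is the image of p under the projection x₁: Aⁿ → A¹. -/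
/-!
The residue field `L = k[x₁, …, xₙ] ⧸ p` is finite over `k` by Zariski's lemma and separable, so
by the primitive element theorem it has only finitely many intermediate fields. The images of the
affine-linear polynomials form a `k`-subspace `V` generating `L`. If no element of `V` were
primitive, `V` would be the union of the finitely many subspaces `V ∩ M`, `M` a proper
intermediate field, all proper since `V` generates `L`; a vector space over an infinite field is
not such a union.
-/

open IntermediateField

theorem Submodule.exists_adjoin_simple_eq_top_of_adjoin_eq_top {K L : Type*} [Field K]
    [Infinite K] [Field L] [Algebra K L] [Finite (IntermediateField K L)] (V : Submodule K L)
    (hV : adjoin K (V : Set L) = ⊤) : ∃ v ∈ V, K⟮v⟯ = ⊤ := by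
  by_contra! hproper
  have hcover : ⋃ M : {M : IntermediateField K L // M ≠ ⊤},
      ((M.1.toSubalgebra.toSubmodule.comap V.subtype : Submodule K V) : Set V) = Set.univ :=
    Set.eq_univ_of_forall fun v ↦ Set.mem_iUnion.mpr
      ⟨⟨K⟮(v : L)⟯, hproper v v.2⟩, mem_adjoin_simple_self K (v : L)⟩
  obtain ⟨⟨M, hM⟩, hVM⟩ := Subspace.exists_eq_top_of_iUnion_eq_univ hcover
  refine hM (top_le_iff.mp (hV ▸ adjoin_le_iff.mpr fun v hv ↦ ?_))
  simpa using (Submodule.eq_top_iff'.mp hVM) ⟨v, hv⟩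

theorem MvPolynomial.adjoin_map_restrictTotalDegree_one_eq_top {σ R S : Type*} [CommSemiring R]
    [CommSemiring S] [Algebra R S] {f : MvPolynomial σ R →ₐ[R] S} (hf : Function.Surjective f) :
    Algebra.adjoin R ((restrictTotalDegree σ R 1).map f.toLinearMap : Set S) = ⊤ := by
  refine top_le_iff.mp (le_trans (b := Algebra.adjoin R (f '' Set.range X)) ?_
    (Algebra.adjoin_mono ?_))
  · rw [← AlgHom.map_adjoin, adjoin_range_X, Algebra.map_top, (AlgHom.range_eq_top f).mpr hf]
  · rintro _ ⟨_, ⟨i, rfl⟩, rfl⟩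
    refine ⟨X i, (mem_restrictTotalDegree σ 1 _).mpr ?_, rfl⟩
    simpa [X] using totalDegree_monomial_le (Finsupp.single i 1) (1 : R)

/-- A closed point of `𝔸ⁿ_k` is a maximal ideal `p` of `k[x_1, …, x_n]`; its residue field is
`k[x_1, …, x_n] ⧸ p`.  The residue field of the image point `x₁(p) ∈ 𝔸¹` is the subfield of
`k(p)` generated over `k` by the image of `x₁`; the map of residue fields is an isomorphism
precisely when this image generates all of `k(p)` over `k`. -/
theorem stmt_11_general (k : Type*) [Field k] [Infinite k] (n : ℕ)
    (p : Ideal (MvPolynomial (Fin n) k)) [hp : p.IsMaximal]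
    (hsep : Algebra.IsSeparable k (MvPolynomial (Fin n) k ⧸ p)) :
    ∃ f : MvPolynomial (Fin n) k, f.totalDegree ≤ 1 ∧
      Algebra.adjoin k {Ideal.Quotient.mk p f} = ⊤ := by
  let := Ideal.Quotient.field p
  have : Module.Finite k (MvPolynomial (Fin n) k ⧸ p) :=
    finite_of_finite_type_of_isJacobsonRing _ _
  have : Finite (IntermediateField k (MvPolynomial (Fin n) k ⧸ p)) :=
    Field.finite_intermediateField_of_exists_primitive_element _ _
      (Field.exists_primitive_element _ _)
  set V :=
    (MvPolynomial.restrictTotalDegree (Fin n) k 1).map (Ideal.Quotient.mkₐ k p).toLinearMap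
  have hV : adjoin k (V : Set (MvPolynomial (Fin n) k ⧸ p)) = ⊤ := by
    have := MvPolynomial.adjoin_map_restrictTotalDegree_one_eq_top
      (Ideal.Quotient.mkₐ_surjective k p)
    exact toSubalgebra_injective <| top_le_iff.mp (this ▸ algebra_adjoin_le_adjoin k _)
  obtain ⟨_, ⟨f, hf, rfl⟩, hprim⟩ := V.exists_adjoin_simple_eq_top_of_adjoin_eq_top hV
  refine ⟨f, (MvPolynomial.mem_restrictTotalDegree _ _ f).mp hf, ?_⟩
  rw [← IntermediateField.adjoin_simple_toSubalgebra_of_isAlgebraic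
    (Algebra.IsAlgebraic.isAlgebraic _)]
  simpa using congrArg toSubalgebra hprim

/-- Let `k` be an infinite field and `p` a closed separable point of affine
`n`-space `𝔸ⁿ` over `k` (`n ≥ 2`) of degree `m`.  Then there is a linear coordinate `x₁` on
`𝔸ⁿ` (an affine-linear polynomial, i.e. of total degree at most `1`) such that the induced
map of residue fields `k(x₁(p)) → k(p)` is an isomorphism.

A closed point of `𝔸ⁿ_k` is a maximal ideal `p` of `k[x_1, …, x_n]`; its residue field is
`k[x_1, …, x_n] ⧸ p`.  The residue field of the image point `x₁(p) ∈ 𝔸¹` is the subfield of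
`k(p)` generated over `k` by the image of `x₁`; the map of residue fields is an isomorphism
precisely when this image generates all of `k(p)` over `k`. -/
theorem stmt_11 (k : Type*) [Field k] [Infinite k] (n m : ℕ) (hn : 2 ≤ n)
    (p : Ideal (MvPolynomial (Fin n) k)) [hp : p.IsMaximal]
    (hsep : Algebra.IsSeparable k (MvPolynomial (Fin n) k ⧸ p))
    (hdeg : Module.finrank k (MvPolynomial (Fin n) k ⧸ p) = m) :
    ∃ f : MvPolynomial (Fin n) k, f.totalDegree ≤ 1 ∧
      Algebra.adjoin k {Ideal.Quotient.mk p f} = ⊤ :=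
  stmt_11_general k n p (hp := hp) hsep
end
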